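/- arXiv:1801.07191 — 3 statements merged into one kernel-verified Lean document; each statement's English description precedes it below -/
import Mathlib

section
/- Let X be a pre-Riesz space with vector lattice cover (Y, i), and let S ⊆ X₊ be non-empty. Then the ideal 𝓘_{i(S)} generated by i(S) in Y satisfies i⁻¹(𝓘_{i(S)}) = 𝓘_S, and 𝓘_{i(S)} is the smallest ideal J of Y with i⁻¹(J) = 𝓘_S. -/
open Set

section Defs

variable {Z : Type*} [AddCommGroup Z] [PartialOrder Z] [Module ℝ Z]

/-- Set of common upper bounds of `x` and `-x`. -/
def pmUB (x : Z) : Set Z := upperBounds {x, -x}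

/-- Disjointness in an ordered vector space: `{±(x+y)}ᵘ = {±(x−y)}ᵘ`. -/
def Disj (x y : Z) : Prop :=
  upperBounds {x + y, -(x + y)} = upperBounds {x - y, -(x - y)}

/-- Disjoint complement of a set. -/
def dcomp (M : Set Z) : Set Z := {x : Z | ∀ y ∈ M, Disj x y}

/-- `D` is a linear subspace. -/
def IsSubsp (D : Set Z) : Prop :=
  (0 : Z) ∈ D ∧ (∀ x ∈ D, ∀ y ∈ D, x + y ∈ D) ∧ ∀ (r : ℝ), ∀ x ∈ D, r • x ∈ D

/-- A band is a linear subspace `B` with `Bᵈᵈ = B`. -/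
def IsBand (B : Set Z) : Prop := IsSubsp B ∧ dcomp (dcomp B) = B

/-- `M` is solid: `{±y}ᵘ ⊆ {±x}ᵘ` with `y ∈ M` implies `x ∈ M`. -/
def IsSolid (M : Set Z) : Prop := ∀ x : Z, ∀ y ∈ M, pmUB y ⊆ pmUB x → x ∈ M

/-- An ideal is a solid linear subspace. -/
def IsIdeal (I : Set Z) : Prop := IsSubsp I ∧ IsSolid I

/-- The ideal generated by `S`. -/
def idealGen (S : Set Z) : Set Z := ⋂₀ {I : Set Z | IsIdeal I ∧ S ⊆ I}

/-- The band generated by `S`. -/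
def bandGen (S : Set Z) : Set Z := ⋂₀ {B : Set Z | IsBand B ∧ S ⊆ B}

/-- A subset is directed if any two elements have a common upper bound in it. -/
def IsDirectedSet (D : Set Z) : Prop := ∀ x ∈ D, ∀ y ∈ D, ∃ z ∈ D, x ≤ z ∧ y ≤ z

/-- `D` is order dense in `E` (infima taken within `E`): every `y ∈ E` is the
infimum, computed in `E`, of `{w ∈ D | y ≤ w}`. -/
def OrderDenseIn (D E : Set Z) : Prop :=
  ∀ y ∈ E, y ∈ lowerBounds {w : Z | w ∈ D ∧ y ≤ w} ∧
    ∀ z ∈ E, z ∈ lowerBounds {w : Z | w ∈ D ∧ y ≤ w} → z ≤ y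

/-- `D` is majorizing in `E`. -/
def MajorizingIn (D E : Set Z) : Prop := ∀ y ∈ E, ∃ d ∈ D, y ≤ d

end Defs

/-!
The elements of `Y` dominated by some `i x` with `x ∈ 𝓘_S` form an ideal of `Y` containing `i(S)`,
and by solidity of `𝓘_S` its preimage lies in `𝓘_S`; hence `i⁻¹(𝓘_{i(S)}) ⊆ 𝓘_S`. Conversely,
order density of `i(X)` lets `i` transfer the relation `{±a}ᵘ ⊆ {±b}ᵘ` from `X` to `Y`, so the
preimage of any ideal of `Y` is an ideal of `X`; applied to `𝓘_{i(S)}` this gives `𝓘_S ⊆ i⁻¹(𝓘_{i(S)})`.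
-/

section PmUB

variable {Z : Type*} [AddCommGroup Z] [PartialOrder Z]

lemma mem_pmUB {x u : Z} : u ∈ pmUB x ↔ x ≤ u ∧ -x ≤ u := by
  simp [pmUB, upperBounds]

@[simp]
lemma pmUB_neg (x : Z) : pmUB (-x) = pmUB x := by
  ext u
  simp only [mem_pmUB, neg_neg, and_comm]

lemma pmUB_subset_of_mem {x a : Z} (h : a ∈ pmUB x) : pmUB a ⊆ pmUB x :=
  fun _ hu => upperBounds_mono_mem (mem_pmUB.1 hu).1 h

lemma IsSolid.mem_of_mem_pmUB {I : Set Z} (hI : IsSolid I) {x a : Z} (ha : a ∈ I)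
    (hx : a ∈ pmUB x) : x ∈ I :=
  hI x a ha (pmUB_subset_of_mem hx)

lemma smul_mem_pmUB [Module ℝ Z] [PosSMulMono ℝ Z] {r : ℝ} {x u : Z} (hr : 0 ≤ r)
    (hu : u ∈ pmUB x) : r • u ∈ pmUB (r • x) := by
  rw [mem_pmUB] at *
  exact ⟨smul_le_smul_of_nonneg_left hu.1 hr, smul_neg r x ▸ smul_le_smul_of_nonneg_left hu.2 hr⟩

lemma abs_smul_mem_pmUB [Module ℝ Z] [PosSMulMono ℝ Z] (r : ℝ) {x u : Z} (hu : u ∈ pmUB x) :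
    |r| • u ∈ pmUB (r • x) := by
  rcases le_total 0 r with hr | hr
  · rw [abs_of_nonneg hr]
    exact smul_mem_pmUB hr hu
  · rw [abs_of_nonpos hr, ← pmUB_neg, ← neg_smul]
    exact smul_mem_pmUB (neg_nonneg.2 hr) hu

variable [AddLeftMono Z]

lemma mem_pmUB_self {a : Z} (ha : 0 ≤ a) : a ∈ pmUB a :=
  mem_pmUB.2 ⟨le_rfl, (neg_nonpos.2 ha).trans ha⟩

lemma add_mem_pmUB {x y u v : Z} (hu : u ∈ pmUB x) (hv : v ∈ pmUB y) : u + v ∈ pmUB (x + y) := by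
  rw [mem_pmUB] at *
  exact ⟨add_le_add hu.1 hv.1, neg_add x y ▸ add_le_add hu.2 hv.2⟩

end PmUB

section IdealGen

variable {Z : Type*} [AddCommGroup Z] [PartialOrder Z] [Module ℝ Z]

lemma isIdeal_idealGen (S : Set Z) : IsIdeal (idealGen S) :=
  ⟨⟨fun _ hI => hI.1.1.1,
    fun _ ha _ hb I hI => hI.1.1.2.1 _ (ha I hI) _ (hb I hI),
    fun r _ ha I hI => hI.1.1.2.2 r _ (ha I hI)⟩,
   fun _ _ hb hsub I hI => hI.1.2 _ _ (hb I hI) hsub⟩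

lemma subset_idealGen (S : Set Z) : S ⊆ idealGen S :=
  fun _ hs _ hI => hI.2 hs

lemma idealGen_subset {S J : Set Z} (hJ : IsIdeal J) (hSJ : S ⊆ J) : idealGen S ⊆ J :=
  sInter_subset_of_mem ⟨hJ, hSJ⟩

end IdealGen

section Embedding

variable {X Y : Type*} [AddCommGroup X] [Module ℝ X] [AddCommGroup Y] [PartialOrder Y]
  [Module ℝ Y]

def dominatedBy (i : X →ₗ[ℝ] Y) (I : Set X) : Set Y := {y : Y | ∃ x ∈ I, i x ∈ pmUB y}

lemma isIdeal_dominatedBy [AddLeftMono Y] [PosSMulMono ℝ Y] (i : X →ₗ[ℝ] Y) {I : Set X}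
    (hI : IsSubsp I) : IsIdeal (dominatedBy i I) := by
  obtain ⟨hI0, hIadd, hIsmul⟩ := hI
  refine ⟨⟨⟨0, hI0, by simp [mem_pmUB]⟩, ?_, ?_⟩, ?_⟩
  · rintro _ ⟨x₁, hx₁, h₁⟩ _ ⟨x₂, hx₂, h₂⟩
    exact ⟨x₁ + x₂, hIadd _ hx₁ _ hx₂, (map_add i x₁ x₂).symm ▸ add_mem_pmUB h₁ h₂⟩
  · rintro r _ ⟨x, hx, h⟩
    exact ⟨|r| • x, hIsmul _ _ hx, (map_smul i |r| x).symm ▸ abs_smul_mem_pmUB r h⟩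
  · rintro _ _ ⟨x, hx, h⟩ hsub
    exact ⟨x, hx, hsub h⟩

variable [PartialOrder X]

lemma map_le_map_iff_of_nonneg_iff [AddLeftMono X] [AddLeftMono Y] (i : X →ₗ[ℝ] Y)
    (hbi : ∀ x : X, 0 ≤ i x ↔ 0 ≤ x) (a b : X) : i a ≤ i b ↔ a ≤ b := by
  rw [← sub_nonneg, ← sub_nonneg (b := a), ← map_sub, hbi]

lemma map_mem_pmUB_map_iff (i : X →ₗ[ℝ] Y) (hi : ∀ a b : X, i a ≤ i b ↔ a ≤ b) {w a : X} :
    i w ∈ pmUB (i a) ↔ w ∈ pmUB a := by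
  simp only [mem_pmUB, ← map_neg, hi]

lemma preimage_dominatedBy_subset (i : X →ₗ[ℝ] Y) (hi : ∀ a b : X, i a ≤ i b ↔ a ≤ b)
    {I : Set X} (hI : IsSolid I) : i ⁻¹' dominatedBy i I ⊆ I := by
  rintro x ⟨a, ha, hax⟩
  exact hI.mem_of_mem_pmUB ha ((map_mem_pmUB_map_iff i hi).1 hax)

lemma pmUB_map_subset_pmUB_map (i : X →ₗ[ℝ] Y) (hi : ∀ a b : X, i a ≤ i b ↔ a ≤ b)
    (hdense : ∀ y : Y, IsGLB {z : Y | z ∈ range i ∧ y ≤ z} y) {a b : X}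
    (hab : pmUB a ⊆ pmUB b) : pmUB (i a) ⊆ pmUB (i b) := by
  intro u hu c hc
  refine (hdense u).2 ?_
  rintro _ ⟨⟨w, rfl⟩, huw⟩
  have hw : w ∈ pmUB a := (map_mem_pmUB_map_iff i hi).1 (upperBounds_mono_mem huw hu)
  exact (map_mem_pmUB_map_iff i hi).2 (hab hw) hc

lemma IsIdeal.preimage (i : X →ₗ[ℝ] Y)
    (hi : ∀ a b : X, pmUB a ⊆ pmUB b → pmUB (i a) ⊆ pmUB (i b)) {J : Set Y} (hJ : IsIdeal J) :
    IsIdeal (i ⁻¹' J) := by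
  obtain ⟨⟨hJ0, hJadd, hJsmul⟩, hJsolid⟩ := hJ
  refine ⟨⟨?_, fun a ha b hb => ?_, fun r a ha => ?_⟩, fun a b hb hab => hJsolid _ _ hb (hi b a hab)⟩
  · simpa using hJ0
  · simpa using hJadd _ ha _ hb
  · simpa using hJsmul r _ ha

end Embedding

theorem stmt_8_general {X Y : Type*} [AddCommGroup X] [PartialOrder X] [CovariantClass X X (· + ·) (· ≤ ·)] [Module ℝ X] [AddCommGroup Y] [Lattice Y] [CovariantClass Y Y (· + ·) (· ≤ ·)] [Module ℝ Y] [PosSMulMono ℝ Y]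
    (i : X →ₗ[ℝ] Y) (hbi : ∀ x : X, 0 ≤ i x ↔ 0 ≤ x)
    (hdense : ∀ y : Y, IsGLB {z : Y | z ∈ Set.range i ∧ y ≤ z} y)
    (S : Set X) (hpos : ∀ s ∈ S, (0 : X) ≤ s) :
    i ⁻¹' idealGen (i '' S) = idealGen S ∧
      ∀ J : Set Y, IsIdeal J → i ⁻¹' J = idealGen S → idealGen (i '' S) ⊆ J := by
  have hi := map_le_map_iff_of_nonneg_iff i hbi
  have hSdom : i '' S ⊆ dominatedBy i (idealGen S) := by
    rintro _ ⟨s, hs, rfl⟩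
    exact ⟨s, subset_idealGen S hs, mem_pmUB_self ((hbi s).2 (hpos s hs))⟩
  refine ⟨Subset.antisymm ?_ ?_, fun J hJ hJS => idealGen_subset hJ ?_⟩
  · calc i ⁻¹' idealGen (i '' S)
        ⊆ i ⁻¹' dominatedBy i (idealGen S) :=
          preimage_mono (idealGen_subset (isIdeal_dominatedBy i (isIdeal_idealGen S).1) hSdom)
      _ ⊆ idealGen S := preimage_dominatedBy_subset i hi (isIdeal_idealGen S).2
  · refine idealGen_subset ((isIdeal_idealGen _).preimage i ?_) ?_
    · exact fun a b => pmUB_map_subset_pmUB_map i hi hdense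
    · exact fun s hs => subset_idealGen _ (mem_image_of_mem i hs)
  · rintro _ ⟨s, hs, rfl⟩
    exact (hJS ▸ subset_idealGen S hs : s ∈ i ⁻¹' J)

/-- For non-empty S ⊆ X₊, the ideal generated by i(S) in Y is the smallest
extension ideal of the ideal generated by S in X. -/
theorem stmt_8 {X Y : Type*} [AddCommGroup X] [PartialOrder X] [CovariantClass X X (· + ·) (· ≤ ·)] [Module ℝ X] [PosSMulMono ℝ X] [AddCommGroup Y] [Lattice Y] [CovariantClass Y Y (· + ·) (· ≤ ·)] [Module ℝ Y] [PosSMulMono ℝ Y]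
    (i : X →ₗ[ℝ] Y) (hbi : ∀ x : X, 0 ≤ i x ↔ 0 ≤ x)
    (hdense : ∀ y : Y, IsGLB {z : Y | z ∈ Set.range i ∧ y ≤ z} y)
    (S : Set X) (hne : S.Nonempty) (hpos : ∀ s ∈ S, (0 : X) ≤ s) :
    i ⁻¹' idealGen (i '' S) = idealGen S ∧
      ∀ J : Set Y, IsIdeal J → i ⁻¹' J = idealGen S → idealGen (i '' S) ⊆ J :=
  stmt_8_general i hbi hdense S hpos
end

section
/- Let X be an Archimedean pervasive pre-Riesz space, a ∈ X, and S ⊆ X₊ a set such that sup S exists in X. If a ⊥ s for all s ∈ S, then a ⊥ sup S. -/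
open Set

/-!
Disjointness is decided in the vector lattice cover: since `i` is bipositive and `i(X)` is
order dense, `|i w|` is the infimum of `i` applied to the upper bounds of `±w`, so `a ⊥ b` iff
`|i a + i b| = |i a - i b|`, i.e. iff `|i a| ⊓ |i b| = 0`. If `|i a| ⊓ i m > 0`, pervasiveness
gives `x` with `0 < i x ≤ |i a| ⊓ i m`. Then `i x` is disjoint from every `i s`, `s ∈ S`, so
`i s + i x = i s ⊔ i x ≤ i m`; thus `m - x` is an upper bound of `S`, contradicting `m = sup S`.
-/

section LatticeOrderedGroup

variable {Y : Type*} [AddCommGroup Y] [Lattice Y] [AddLeftMono Y]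

lemma two_nsmul_sup (x y : Y) : 2 • (x ⊔ y) = 2 • x ⊔ 2 • y := by
  rw [two_nsmul_sup_eq_add_add_abs_sub, abs, add_sup, sup_comm, two_nsmul, two_nsmul]
  congr 1 <;> abel

lemma two_nsmul_abs (p : Y) : 2 • |p| = |2 • p| := by
  rw [abs, two_nsmul_sup, smul_neg, abs]

lemma abs_add_sup_abs_sub (p q : Y) : |p + q| ⊔ |p - q| = |p| + |q| := by
  simp only [abs, add_sup, sup_add, neg_add, sub_eq_add_neg, neg_neg]
  ac_rfl

lemma abs_add_add_abs_sub (p q : Y) : |p + q| + |p - q| = 2 • (|p| ⊔ |q|) := by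
  rw [two_nsmul_sup, two_nsmul_abs, two_nsmul_abs]
  simp only [abs, add_sup, sup_add, two_nsmul, neg_add, sub_eq_add_neg, neg_neg]
  rw [show p + q + (p + -q) = p + p by abel, show -p + -q + (p + -q) = -q + -q by abel,
    show p + q + (-p + q) = q + q by abel, show -p + -q + (-p + q) = -p + -p by abel]
  ac_rfl

lemma abs_add_inf_abs_sub (p q : Y) :
    |p + q| ⊓ |p - q| = |p| ⊔ |q| - |p| ⊓ |q| := by
  have h := inf_add_sup (|p + q|) (|p - q|)
  rw [abs_add_sup_abs_sub, abs_add_add_abs_sub, ← inf_add_sup |p| |q|, two_nsmul] at h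
  rw [eq_sub_iff_add_eq, ← add_right_cancel_iff (a := |p| ⊔ |q|), ← h]
  abel

lemma abs_add_eq_abs_sub_iff (p q : Y) : |p + q| = |p - q| ↔ |p| ⊓ |q| = 0 := by
  have hc : 0 ≤ |p| ⊓ |q| := le_inf (abs_nonneg p) (abs_nonneg q)
  rw [← inf_eq_sup, abs_add_inf_abs_sub, abs_add_sup_abs_sub, ← inf_add_sup |p| |q|,
    sub_eq_iff_eq_add, add_right_comm, right_eq_add, add_eq_zero_iff_of_nonneg hc hc, and_self]

lemma add_le_of_inf_eq_zero {a b c : Y} (h : a ⊓ b = 0) (ha : a ≤ c) (hb : b ≤ c) :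
    a + b ≤ c := by
  rw [← inf_add_sup a b, h, zero_add]
  exact sup_le ha hb

end LatticeOrderedGroup

section Bipositive

variable {X Y : Type*} [AddCommGroup X] [PartialOrder X] [AddLeftMono X] [Module ℝ X]
  [AddCommGroup Y] [Lattice Y] [AddLeftMono Y] [Module ℝ Y]
  {i : X →ₗ[ℝ] Y}

lemma le_iff_map_le_of_bipositive (hbi : ∀ x : X, 0 ≤ i x ↔ 0 ≤ x) {z w : X} :
    z ≤ w ↔ i z ≤ i w := by
  rw [← sub_nonneg, ← sub_nonneg (b := i z), ← map_sub, hbi]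

lemma mem_upperBounds_pair_neg_iff (hbi : ∀ x : X, 0 ≤ i x ↔ 0 ≤ x) {w z : X} :
    z ∈ upperBounds {w, -w} ↔ |i w| ≤ i z := by
  rw [upperBounds_insert, upperBounds_singleton, Set.mem_inter_iff, Set.mem_Ici, Set.mem_Ici,
    abs_le', le_iff_map_le_of_bipositive hbi, le_iff_map_le_of_bipositive hbi, map_neg]

lemma image_upperBounds_pair_neg (hbi : ∀ x : X, 0 ≤ i x ↔ 0 ≤ x) (w : X) :
    i '' upperBounds {w, -w} = {z : Y | z ∈ Set.range i ∧ |i w| ≤ z} := by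
  ext z
  constructor
  · rintro ⟨x, hx, rfl⟩
    exact ⟨⟨x, rfl⟩, (mem_upperBounds_pair_neg_iff hbi).1 hx⟩
  · rintro ⟨⟨x, rfl⟩, hx⟩
    exact ⟨x, (mem_upperBounds_pair_neg_iff hbi).2 hx, rfl⟩

lemma disj_iff_abs_map_add_eq_abs_map_sub (hbi : ∀ x : X, 0 ≤ i x ↔ 0 ≤ x)
    (hdense : ∀ y : Y, IsGLB {z : Y | z ∈ Set.range i ∧ y ≤ z} y) {x y : X} :
    Disj x y ↔ |i (x + y)| = |i (x - y)| := by
  constructor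
  · intro h
    have h' := congrArg (i '' ·) h
    simp only [image_upperBounds_pair_neg hbi] at h'
    exact (hdense _).unique (h' ▸ hdense _)
  · intro h
    ext z
    rw [mem_upperBounds_pair_neg_iff hbi, mem_upperBounds_pair_neg_iff hbi, h]

lemma disj_iff_abs_inf_abs_eq_zero (hbi : ∀ x : X, 0 ≤ i x ↔ 0 ≤ x)
    (hdense : ∀ y : Y, IsGLB {z : Y | z ∈ Set.range i ∧ y ≤ z} y) {x y : X} :
    Disj x y ↔ |i x| ⊓ |i y| = 0 := by
  rw [disj_iff_abs_map_add_eq_abs_map_sub hbi hdense, map_add, map_sub, abs_add_eq_abs_sub_iff]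

end Bipositive

lemma IsLUB.nonneg {X : Type*} [AddCommGroup X] [PartialOrder X] [AddLeftMono X]
    {S : Set X} {m : X} (hpos : ∀ s ∈ S, 0 ≤ s) (hm : IsLUB S m) : 0 ≤ m := by
  have hle : m ≤ m + m := hm.2 fun s hs ↦
    (le_add_of_nonneg_left (hpos s hs)).trans (add_le_add (hm.1 hs) (hm.1 hs))
  simpa using hle

theorem stmt_13_general {X Y : Type*} [AddCommGroup X] [PartialOrder X] [CovariantClass X X (· + ·) (· ≤ ·)] [Module ℝ X] [AddCommGroup Y] [Lattice Y] [CovariantClass Y Y (· + ·) (· ≤ ·)] [Module ℝ Y]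
    (i : X →ₗ[ℝ] Y) (hbi : ∀ x : X, 0 ≤ i x ↔ 0 ≤ x)
    (hdense : ∀ y : Y, IsGLB {z : Y | z ∈ Set.range i ∧ y ≤ z} y)
    (hperv : ∀ y : Y, 0 < y → ∃ x : X, 0 < i x ∧ i x ≤ y)
    (a m : X) (S : Set X) (hpos : ∀ s ∈ S, (0 : X) ≤ s) (hsup : IsLUB S m)
    (hdisj : ∀ s ∈ S, Disj a s) : Disj a m := by
  have him : 0 ≤ i m := (hbi m).2 (hsup.nonneg hpos)
  rw [disj_iff_abs_inf_abs_eq_zero hbi hdense, abs_of_nonneg him]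
  by_contra hne
  obtain ⟨x, hx, hxle⟩ := hperv _ ((le_inf (abs_nonneg _) him).lt_of_ne' hne)
  have hub : m - x ∈ upperBounds S := by
    intro s hs
    have his : 0 ≤ i s := (hbi s).2 (hpos s hs)
    have hdisj_s : i s ⊓ i x = 0 := by
      refine le_antisymm ?_ (le_inf his hx.le)
      calc i s ⊓ i x ≤ |i a| ⊓ |i s| := by
            rw [abs_of_nonneg his, inf_comm]; exact inf_le_inf_right _ (hxle.trans inf_le_left)
        _ = 0 := (disj_iff_abs_inf_abs_eq_zero hbi hdense).1 (hdisj s hs)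
    rw [le_iff_map_le_of_bipositive hbi, map_sub, le_sub_iff_add_le]
    exact add_le_of_inf_eq_zero hdisj_s ((le_iff_map_le_of_bipositive hbi).1 (hsup.1 hs))
      (hxle.trans inf_le_right)
  have hle : i m ≤ i m - i x := by
    rw [← map_sub, ← le_iff_map_le_of_bipositive hbi]; exact hsup.2 hub
  exact (sub_lt_self _ hx).not_ge hle

/-- In an Archimedean pervasive pre-Riesz space, if a ⊥ s for all s in a set S
of positive elements whose supremum exists, then a ⊥ sup S. -/
theorem stmt_13 {X Y : Type*} [AddCommGroup X] [PartialOrder X] [CovariantClass X X (· + ·) (· ≤ ·)] [Module ℝ X] [PosSMulMono ℝ X] [AddCommGroup Y] [Lattice Y] [CovariantClass Y Y (· + ·) (· ≤ ·)] [Module ℝ Y] [PosSMulMono ℝ Y]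
    (i : X →ₗ[ℝ] Y) (hbi : ∀ x : X, 0 ≤ i x ↔ 0 ≤ x)
    (hdense : ∀ y : Y, IsGLB {z : Y | z ∈ Set.range i ∧ y ≤ z} y)
    (harch : ∀ x y : X, (∀ n : ℕ, n • x ≤ y) → x ≤ 0)
    (hperv : ∀ y : Y, 0 < y → ∃ x : X, 0 < i x ∧ i x ≤ y)
    (a m : X) (S : Set X) (hpos : ∀ s ∈ S, (0 : X) ≤ s) (hsup : IsLUB S m)
    (hdisj : ∀ s ∈ S, Disj a s) : Disj a m :=
  stmt_13_general i hbi hdense hperv a m S hpos hsup hdisj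
end

section
/- Let X be an ordered vector space and M ⊆ X a non-empty subset. Then the smallest solvex ideal containing M equals the solvex hull of the ideal generated by M, i.e., 𝓘_M^solv = solv(𝓘_M). -/
open Set

section Solvex

variable {Z : Type*} [AddCommGroup Z] [PartialOrder Z] [Module ℝ Z]

/-- Solvexity of a set. -/
def IsSolvex (M : Set Z) : Prop :=
  ∀ (x : Z) (n : ℕ), 0 < n → ∀ xs : Fin n → Z, (∀ j, xs j ∈ M) →
    upperBounds {w : Z | ∃ lam eps : Fin n → ℝ,
        (∀ j, lam j ∈ Set.Ioc (0 : ℝ) 1) ∧ (∑ j, lam j) = 1 ∧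
        (∀ j, eps j = 1 ∨ eps j = -1) ∧ w = ∑ j, (eps j * lam j) • xs j} ⊆
      upperBounds {x, -x} →
    x ∈ M

/-- The solvex hull of a set. -/
def solvHull (M : Set Z) : Set Z := ⋂₀ {S : Set Z | IsSolvex S ∧ M ⊆ S}

end Solvex

/-!
`solv(𝓘_M)` is itself a solvex ideal containing `M`, and every solvex ideal
containing `M` contains `𝓘_M` and hence `solv(𝓘_M)`. Solvex sets are solid, so it remains to
see that the solvex hull of a linear subspace `D` is again a subspace. Scaling by `r ≠ 0`
preserves solvexity (upper bounds of `{±r•w}` are those of `{±|r|•w}`), so `solv(D)` is closed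
under scaling; and `x + y` is a signed convex combination of `2•x` and `2•y`.
-/

section SignedConvexCombos

variable {X : Type*} [AddCommGroup X] [Module ℝ X]

def signedConvexCombos {n : ℕ} (xs : Fin n → X) : Set X :=
  {w : X | ∃ lam eps : Fin n → ℝ,
      (∀ j, lam j ∈ Set.Ioc (0 : ℝ) 1) ∧ (∑ j, lam j) = 1 ∧
      (∀ j, eps j = 1 ∨ eps j = -1) ∧ w = ∑ j, (eps j * lam j) • xs j}

theorem neg_mem_signedConvexCombos {n : ℕ} {xs : Fin n → X} {w : X}
    (h : w ∈ signedConvexCombos xs) : -w ∈ signedConvexCombos xs := by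
  obtain ⟨lam, eps, hlam, hsum, heps, rfl⟩ := h
  refine ⟨lam, -eps, hlam, hsum, fun j => (heps j).symm.imp (by simp [·]) (by simp [·]), ?_⟩
  simp [← Finset.sum_neg_distrib, neg_smul]

theorem smul_mem_signedConvexCombos {n : ℕ} {xs : Fin n → X} {w : X} (r : ℝ)
    (h : w ∈ signedConvexCombos xs) : r • w ∈ signedConvexCombos (r • xs) := by
  obtain ⟨lam, eps, hlam, hsum, heps, rfl⟩ := h
  refine ⟨lam, eps, hlam, hsum, heps, ?_⟩
  simp only [Finset.smul_sum, Pi.smul_apply, smul_comm r]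

theorem add_mem_signedConvexCombos_two_smul (x y : X) :
    x + y ∈ signedConvexCombos ![(2 : ℝ) • x, (2 : ℝ) • y] := by
  refine ⟨fun _ => 1 / 2, fun _ => 1, fun _ => by norm_num, by norm_num, fun _ => Or.inl rfl, ?_⟩
  simp [Fin.sum_univ_two, smul_smul]

end SignedConvexCombos

section Hulls

variable {X : Type*} [AddCommGroup X] [PartialOrder X] [Module ℝ X]

theorem IsSolvex.mem_of_mem_signedConvexCombos {S : Set X} (hS : IsSolvex S) {n : ℕ}
    (hn : 0 < n) {xs : Fin n → X} (hxs : ∀ j, xs j ∈ S) {x : X}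
    (hx : x ∈ signedConvexCombos xs) : x ∈ S := by
  refine hS x n hn xs hxs (upperBounds_mono_set ?_)
  rintro _ (rfl | rfl)
  exacts [hx, neg_mem_signedConvexCombos hx]

theorem IsSolvex.isSolid {S : Set X} (hS : IsSolvex S) : IsSolid S := by
  intro x y hy hxy
  refine hS x 1 one_pos (fun _ => y) (fun _ => hy) (subset_trans ?_ hxy)
  refine upperBounds_mono_set ?_
  have hy' : y ∈ signedConvexCombos (fun _ : Fin 1 => y) :=
    ⟨1, 1, fun _ => by norm_num, by simp, fun _ => Or.inl rfl, by simp⟩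
  rintro _ (rfl | rfl)
  exacts [hy', neg_mem_signedConvexCombos hy']

theorem isSolvex_solvHull (N : Set X) : IsSolvex (solvHull N) :=
  fun x n hn xs hxs hub => mem_sInter.2 fun S hS =>
    hS.1 x n hn xs (fun j => mem_sInter.1 (hxs j) S hS) hub

theorem subset_solvHull (N : Set X) : N ⊆ solvHull N :=
  fun _ hx => mem_sInter.2 fun _ hS => hS.2 hx

theorem solvHull_subset {N S : Set X} (hS : IsSolvex S) (h : N ⊆ S) : solvHull N ⊆ S :=
  sInter_subset_of_mem ⟨hS, h⟩

theorem upperBounds_pair_smul_abs (r : ℝ) (a : X) :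
    upperBounds {r • a, -(r • a)} = upperBounds {|r| • a, -(|r| • a)} := by
  rcases abs_cases r with ⟨h, -⟩ | ⟨h, -⟩
  · rw [h]
  · rw [h, neg_smul, neg_neg, pair_comm]

theorem isIdeal_idealGen_s19 (M : Set X) : IsIdeal (idealGen M) :=
  ⟨⟨mem_sInter.2 fun _ hI => hI.1.1.1,
    fun _ ha _ hb => mem_sInter.2 fun I hI =>
      hI.1.1.2.1 _ (mem_sInter.1 ha I hI) _ (mem_sInter.1 hb I hI),
    fun r _ ha => mem_sInter.2 fun I hI => hI.1.1.2.2 r _ (mem_sInter.1 ha I hI)⟩,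
   fun x _ hy hxy => mem_sInter.2 fun I hI => hI.1.2 x _ (mem_sInter.1 hy I hI) hxy⟩

theorem subset_idealGen_s19 (M : Set X) : M ⊆ idealGen M :=
  fun _ hx => mem_sInter.2 fun _ hI => hI.2 hx

theorem idealGen_subset_s19 {M I : Set X} (hI : IsIdeal I) (hM : M ⊆ I) : idealGen M ⊆ I :=
  sInter_subset_of_mem ⟨hI, hM⟩

end Hulls

section Subspace

variable {X : Type*} [AddCommGroup X] [PartialOrder X] [Module ℝ X] [PosSMulMono ℝ X]

theorem mem_upperBounds_pair_smul_iff {c : ℝ} (hc : 0 < c) (a u : X) :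
    u ∈ upperBounds {c • a, -(c • a)} ↔ c⁻¹ • u ∈ upperBounds {a, -a} := by
  simp only [upperBounds_insert, upperBounds_singleton, mem_inter_iff, mem_Ici, ← smul_neg,
    le_inv_smul_iff_of_pos hc]

theorem IsSolvex.preimage_smul {S : Set X} (hS : IsSolvex S) {r : ℝ} (hr : r ≠ 0) :
    IsSolvex ((r • ·) ⁻¹' S) := by
  intro x n hn xs hxs hub
  refine hS (r • x) n hn (r • xs) hxs fun u hu => ?_
  have hr' : 0 < |r| := abs_pos.2 hr
  suffices |r|⁻¹ • u ∈ upperBounds {x, -x} by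
    rwa [upperBounds_pair_smul_abs, mem_upperBounds_pair_smul_iff hr']
  refine hub fun w hw => ?_
  have hwu : u ∈ upperBounds {r • w, -(r • w)} := by
    rintro _ (rfl | rfl)
    · exact hu (smul_mem_signedConvexCombos r hw)
    · exact hu (smul_neg r w ▸ smul_mem_signedConvexCombos r (neg_mem_signedConvexCombos hw))
  rw [upperBounds_pair_smul_abs, mem_upperBounds_pair_smul_iff hr'] at hwu
  exact hwu (mem_insert w _)

theorem IsSubsp.smul_mem_solvHull {D : Set X} (hD : IsSubsp D) (r : ℝ)
    {x : X} (hx : x ∈ solvHull D) : r • x ∈ solvHull D := by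
  rcases eq_or_ne r 0 with rfl | hr
  · rw [zero_smul]
    exact subset_solvHull D hD.1
  · exact solvHull_subset ((isSolvex_solvHull D).preimage_smul hr)
      (fun z hz => subset_solvHull D (hD.2.2 r z hz)) hx

theorem IsSubsp.add_mem_solvHull {D : Set X} (hD : IsSubsp D) {x y : X}
    (hx : x ∈ solvHull D) (hy : y ∈ solvHull D) : x + y ∈ solvHull D := by
  refine (isSolvex_solvHull D).mem_of_mem_signedConvexCombos two_pos (fun j => ?_)
    (add_mem_signedConvexCombos_two_smul x y)
  fin_cases j
  exacts [hD.smul_mem_solvHull 2 hx, hD.smul_mem_solvHull 2 hy]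

theorem IsSubsp.isIdeal_solvHull {D : Set X} (hD : IsSubsp D) :
    IsIdeal (solvHull D) :=
  ⟨⟨subset_solvHull D hD.1, fun _ hx _ hy => hD.add_mem_solvHull hx hy,
    fun r _ hx => hD.smul_mem_solvHull r hx⟩, (isSolvex_solvHull D).isSolid⟩

end Subspace

theorem stmt_19_general {X : Type*} [AddCommGroup X] [PartialOrder X] [Module ℝ X] [PosSMulMono ℝ X]
    (M : Set X) :
    ⋂₀ {I : Set X | IsIdeal I ∧ IsSolvex I ∧ M ⊆ I} = solvHull (idealGen M) := by
  have hM : M ⊆ solvHull (idealGen M) := (subset_idealGen_s19 M).trans (subset_solvHull _)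
  refine Subset.antisymm (sInter_subset_of_mem ⟨(isIdeal_idealGen_s19 M).1.isIdeal_solvHull,
    isSolvex_solvHull _, hM⟩) (subset_sInter ?_)
  rintro I ⟨hI, hIS, hMI⟩
  exact solvHull_subset hIS (idealGen_subset_s19 hI hMI)

/-- The solvex ideal generated by M equals the solvex hull of the ideal
generated by M. -/
theorem stmt_19 {X : Type*} [AddCommGroup X] [PartialOrder X] [CovariantClass X X (· + ·) (· ≤ ·)] [Module ℝ X] [PosSMulMono ℝ X]
    (M : Set X) (hne : M.Nonempty) :
    ⋂₀ {I : Set X | IsIdeal I ∧ IsSolvex I ∧ M ⊆ I} = solvHull (idealGen M) :=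
  stmt_19_general M
end
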